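/- arXiv:1511.07146 — 4 statements merged into one kernel-verified Lean document; each statement's English description precedes it below -/
import Mathlib

section
/- Let w** be an A_p* weight with constants a, c, and let g : (0,1] → [0,∞) be decreasing, right continuous, not a.e. zero, with ∫_0^1 g = f and ∫_0^1 g^p w** = F < ∞. Then c f^p ≤ (p-1)^{p-1} a^p F. -/
/-!
Put `u(t) = c + ∫_t^1 w(s) s^{-p} ds`. The `A_p^*` condition says `t^{p-1} u(t) ≤ a w(t)`, i.e.
`u(t)/t ≤ -a u'(t)`, so by Grönwall `t^{1/a} u(t)` decreases and `u(t) ≥ c t^{-1/a}`. Hölder's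
inequality with the weight `φ(t) = t^{p-1} u(t)` gives
`(∫ g)^p ≤ (∫ g^p φ) (∫ φ^{-1/(p-1)})^{p-1}`. The first factor is at most `a F`; by the lower
bound on `u` the second integrand is at most `c^{-1/(p-1)} t^{1/(a(p-1)) - 1}`, whose integral is
`a (p-1) c^{-1/(p-1)}`.
-/

open MeasureTheory Set Topology intervalIntegral

theorem mul_rpow_le_rpow_mul_of_add_integral_div_le {u : ℝ → ℝ} {c k t₀ t₁ : ℝ}
    (hk : 0 ≤ k) (ht₀ : 0 < t₀) (ht : t₀ ≤ t₁) (hu : ContinuousOn u (Icc t₀ t₁))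
    (h : ∀ t ∈ Icc t₀ t₁, c + k * ∫ s in t..t₁, u s / s ≤ u t) :
    c * t₁ ^ k ≤ t₀ ^ k * u t₀ := by
  set A : ℝ → ℝ := fun t => ∫ s in t..t₁, u s / s
  have hpos : ∀ s ∈ Icc t₀ t₁, 0 < s := fun s hs => ht₀.trans_le hs.1
  have hv : ContinuousOn (fun s => u s / s) (Icc t₀ t₁) :=
    hu.div continuousOn_id fun s hs => (hpos s hs).ne'
  have hA_cont : ContinuousOn A (Icc t₀ t₁) := by
    have := continuousOn_primitive_interval_left (μ := volume)
      (hv.integrableOn_compact isCompact_Icc |>.mono_set (uIcc_of_le ht).subset)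
    rwa [uIcc_of_le ht] at this
  have hA_deriv : ∀ τ ∈ Ioo t₀ t₁, HasDerivAt A (-(u τ / τ)) τ := fun τ hτ =>
    integral_hasDerivAt_left
      ((hv.mono (Icc_subset_Icc hτ.1.le le_rfl)).intervalIntegrable_of_Icc hτ.2.le)
      ((hv.mono Ioo_subset_Icc_self).stronglyMeasurableAtFilter isOpen_Ioo τ hτ)
      (hv.continuousAt (Icc_mem_nhds hτ.1 hτ.2))
  -- `t ↦ t ^ k * (k * A t + c)` has derivative `k * t ^ (k - 1) * (k * A t + c - u t) ≤ 0`.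
  have hB : AntitoneOn (fun t => t ^ k * (k * A t + c)) (Icc t₀ t₁) := by
    refine antitoneOn_of_hasDerivWithinAt_nonpos (convex_Icc _ _)
      (f' := fun τ => k * τ ^ (k - 1) * (k * A τ + c) + τ ^ k * (k * -(u τ / τ))) ?_ ?_ ?_
    · exact (continuousOn_id.rpow_const fun x hx => Or.inl (hpos x hx).ne').mul
        ((hA_cont.const_smul k).add continuousOn_const)
    · rw [interior_Icc]
      intro τ hτ
      exact ((Real.hasDerivAt_rpow_const (Or.inl (hpos τ (Ioo_subset_Icc_self hτ)).ne')).mul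
        (((hA_deriv τ hτ).const_mul k).add_const c)).hasDerivWithinAt
    · rw [interior_Icc]
      intro τ hτ
      have hτ0 := hpos τ (Ioo_subset_Icc_self hτ)
      have hrw : τ ^ k * (k * -(u τ / τ)) = k * τ ^ (k - 1) * -u τ := by
        rw [Real.rpow_sub_one hτ0.ne']; field_simp
      rw [hrw, ← mul_add]
      exact mul_nonpos_of_nonneg_of_nonpos (by positivity)
        (by linarith [h τ (Ioo_subset_Icc_self hτ)])
  have key := hB (left_mem_Icc.2 ht) (right_mem_Icc.2 ht) ht
  simp only [A, integral_same, mul_zero, zero_add] at key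
  calc c * t₁ ^ k = t₁ ^ k * c := mul_comm _ _
    _ ≤ t₀ ^ k * (k * A t₀ + c) := key
    _ ≤ t₀ ^ k * u t₀ := by
      gcongr
      linarith [h t₀ (left_mem_Icc.2 ht)]

theorem continuousOn_primitive_left_Ioc {f : ℝ → ℝ} {a b : ℝ}
    (hf : ∀ t ∈ Ioc a b, IntervalIntegrable f volume t b) :
    ContinuousOn (fun t => ∫ s in t..b, f s) (Ioc a b) := by
  intro t ht
  obtain ⟨m, ham, hmt⟩ := exists_between ht.1
  have hmb : m ≤ b := hmt.le.trans ht.2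
  have hcont := continuousOn_primitive_interval_left (μ := volume) <| by
    rw [uIcc_of_le hmb]
    exact (intervalIntegrable_iff_integrableOn_Icc_of_le hmb).1 (hf m ⟨ham, hmb⟩)
  rw [uIcc_of_le hmb] at hcont
  have hmem : Icc m b ∈ 𝓝[Ioc a b] t :=
    mem_nhdsWithin.2 ⟨Ioi m, isOpen_Ioi, hmt, fun x hx => ⟨(mem_Ioi.1 hx.1).le, hx.2.2⟩⟩
  exact (hcont t ⟨hmt.le, ht.2⟩).mono_of_mem_nhdsWithin hmem

theorem ENNReal.lintegral_rpow_le_lintegral_rpow_mul_weight {α : Type*} [MeasurableSpace α]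
    (μ : Measure α) {p q : ℝ} (hpq : p.HolderConjugate q) {g φ : α → ENNReal}
    (hg : AEMeasurable g μ) (hφ : AEMeasurable φ μ) (hφ0 : ∀ᵐ x ∂μ, φ x ≠ 0)
    (hφtop : ∀ᵐ x ∂μ, φ x ≠ ⊤) :
    (∫⁻ x, g x ∂μ) ^ p ≤ (∫⁻ x, g x ^ p * φ x ∂μ) * (∫⁻ x, φ x ^ (1 - q) ∂μ) ^ (p - 1) := by
  have hsplit : ∀ᵐ x ∂μ, g x = (g x * φ x ^ p⁻¹) * φ x ^ (-p⁻¹) := by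
    filter_upwards [hφ0, hφtop] with x h0 htop
    rw [mul_assoc, ← ENNReal.rpow_add _ _ h0 htop, add_neg_cancel, ENNReal.rpow_zero, mul_one]
  have hfirst : ∀ x, (g x * φ x ^ p⁻¹) ^ p = g x ^ p * φ x := fun x => by
    rw [ENNReal.mul_rpow_of_nonneg _ _ hpq.nonneg, ← ENNReal.rpow_mul,
      inv_mul_cancel₀ hpq.ne_zero, ENNReal.rpow_one]
  have hsecond : ∀ x, (φ x ^ (-p⁻¹)) ^ q = φ x ^ (1 - q) := fun x => by
    rw [← ENNReal.rpow_mul]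
    congr 1
    field_simp [hpq.ne_zero]
    linarith [hpq.mul_eq_add]
  have holder : ∫⁻ x, g x ∂μ ≤
      (∫⁻ x, g x ^ p * φ x ∂μ) ^ (1 / p) * (∫⁻ x, φ x ^ (1 - q) ∂μ) ^ (1 / q) :=
    calc ∫⁻ x, g x ∂μ = ∫⁻ x, ((fun x => g x * φ x ^ p⁻¹) * fun x => φ x ^ (-p⁻¹)) x ∂μ :=
          lintegral_congr_ae hsplit
      _ ≤ _ := ENNReal.lintegral_mul_le_Lp_mul_Lq μ hpq (hg.mul (hφ.pow_const _)) (hφ.pow_const _)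
      _ = _ := by simp only [hfirst, hsecond]
  calc (∫⁻ x, g x ∂μ) ^ p
      ≤ ((∫⁻ x, g x ^ p * φ x ∂μ) ^ (1 / p) * (∫⁻ x, φ x ^ (1 - q) ∂μ) ^ (1 / q)) ^ p :=
        ENNReal.rpow_le_rpow holder hpq.nonneg
    _ = _ := by
      rw [ENNReal.mul_rpow_of_nonneg _ _ hpq.nonneg, ← ENNReal.rpow_mul, ← ENNReal.rpow_mul,
        one_div_mul_cancel hpq.ne_zero, ENNReal.rpow_one, one_div_mul_eq_div,
        hpq.div_conj_eq_sub_one]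

theorem setIntegral_Ioc_zero_one_rpow_sub_one {β : ℝ} (hβ : 0 < β) :
    ∫ t in Ioc (0 : ℝ) 1, t ^ (β - 1) = 1 / β := by
  rw [← integral_of_le zero_le_one, integral_rpow (Or.inl (by linarith)), sub_add_cancel,
    Real.one_rpow, Real.zero_rpow hβ.ne', sub_zero]

theorem lintegral_Ioc_rpow_one_sub_conj_le {p q c γ : ℝ} (hpq : p.HolderConjugate q)
    (hc : 0 < c) (hγ : 0 < γ) {φ : ℝ → ℝ} (hφ : ∀ t ∈ Ioc 0 1, c * t ^ (p - 1 - γ) ≤ φ t) :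
    ∫⁻ t in Ioc 0 1, ENNReal.ofReal (φ t) ^ (1 - q) ≤
      ENNReal.ofReal (c ^ (1 - q) * ((p - 1) / γ)) := by
  set β := γ / (p - 1) with hβ_def
  have hβ : 0 < β := div_pos hγ hpq.sub_one_pos
  have hq : 1 - q = -(p - 1)⁻¹ := by
    rw [hpq.conjugate_eq]; field_simp [hpq.sub_one_ne_zero]; ring
  have hpt : ∀ t ∈ Ioc (0 : ℝ) 1,
      ENNReal.ofReal (φ t) ^ (1 - q) ≤ ENNReal.ofReal (c ^ (1 - q) * t ^ (β - 1)) := by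
    intro t ht
    have hlow : 0 < c * t ^ (p - 1 - γ) := mul_pos hc (Real.rpow_pos_of_pos ht.1 _)
    rw [ENNReal.ofReal_rpow_of_pos (hlow.trans_le (hφ t ht))]
    refine ENNReal.ofReal_le_ofReal ((Real.rpow_le_rpow_of_nonpos hlow (hφ t ht)
      (by rw [hq]; exact neg_nonpos.2 (inv_pos.2 hpq.sub_one_pos).le)).trans_eq ?_)
    rw [Real.mul_rpow hc.le (Real.rpow_nonneg ht.1.le _), ← Real.rpow_mul ht.1.le, hq]
    congr 2
    rw [hβ_def]
    field_simp [hpq.sub_one_ne_zero]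
    ring
  have hint : IntegrableOn (fun t : ℝ => c ^ (1 - q) * t ^ (β - 1)) (Ioc 0 1) :=
    ((intervalIntegral.intervalIntegrable_rpow' (by linarith)).1).const_mul _
  calc ∫⁻ t in Ioc 0 1, ENNReal.ofReal (φ t) ^ (1 - q)
      ≤ ∫⁻ t in Ioc 0 1, ENNReal.ofReal (c ^ (1 - q) * t ^ (β - 1)) :=
        setLIntegral_mono' measurableSet_Ioc hpt
    _ = ENNReal.ofReal (c ^ (1 - q) * ((p - 1) / γ)) := by
      rw [← ofReal_integral_eq_lintegral_ofReal hint (ae_restrict_of_forall_mem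
        measurableSet_Ioc fun t ht => by have := Real.rpow_pos_of_pos ht.1 (β - 1); positivity),
        MeasureTheory.integral_const_mul, setIntegral_Ioc_zero_one_rpow_sub_one hβ, one_div_div]

theorem mul_setIntegral_rpow_le_of_rpow_le_weight {p c γ : ℝ} (hp : 1 < p) (hc : 0 < c)
    (hγ : 0 < γ) {φ w g : ℝ → ℝ} (hφ : AEMeasurable φ (volume.restrict (Ioc 0 1)))
    (hφ_lower : ∀ t ∈ Ioc 0 1, c * t ^ (p - 1 - γ) ≤ φ t)
    (hφ_upper : ∀ t ∈ Ioc 0 1, φ t ≤ w t) (hg0 : ∀ t ∈ Ioc 0 1, 0 ≤ g t)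
    (hg : IntegrableOn g (Ioc 0 1)) (hgw : IntegrableOn (fun t => g t ^ p * w t) (Ioc 0 1)) :
    c * (∫ t in Ioc 0 1, g t) ^ p ≤ ((p - 1) / γ) ^ (p - 1) * ∫ t in Ioc 0 1, g t ^ p * w t := by
  have hpq := Real.HolderConjugate.conjExponent hp
  set q := p.conjExponent
  set K := c ^ (1 - q) * ((p - 1) / γ)
  have hp1 : 0 < p - 1 := hpq.sub_one_pos
  have hφ_pos : ∀ t ∈ Ioc (0 : ℝ) 1, 0 < φ t := fun t ht =>
    (mul_pos hc (Real.rpow_pos_of_pos ht.1 _)).trans_le (hφ_lower t ht)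
  have hgw0 : ∀ t ∈ Ioc (0 : ℝ) 1, 0 ≤ g t ^ p * w t := fun t ht =>
    mul_nonneg (Real.rpow_nonneg (hg0 t ht) p) ((hφ_pos t ht).le.trans (hφ_upper t ht))
  have hf_eq : ∫⁻ t in Ioc 0 1, ENNReal.ofReal (g t) = ENNReal.ofReal (∫ t in Ioc 0 1, g t) :=
    (ofReal_integral_eq_lintegral_ofReal hg (ae_restrict_of_forall_mem measurableSet_Ioc hg0)).symm
  have hF_le : ∫⁻ t in Ioc 0 1, ENNReal.ofReal (g t) ^ p * ENNReal.ofReal (φ t) ≤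
      ENNReal.ofReal (∫ t in Ioc 0 1, g t ^ p * w t) := by
    rw [ofReal_integral_eq_lintegral_ofReal hgw (ae_restrict_of_forall_mem measurableSet_Ioc hgw0)]
    refine setLIntegral_mono' measurableSet_Ioc fun t ht => ?_
    rw [ENNReal.ofReal_rpow_of_nonneg (hg0 t ht) hpq.nonneg,
      ← ENNReal.ofReal_mul (Real.rpow_nonneg (hg0 t ht) p)]
    exact ENNReal.ofReal_le_ofReal (mul_le_mul_of_nonneg_left (hφ_upper t ht)
      (Real.rpow_nonneg (hg0 t ht) p))
  have key := ENNReal.lintegral_rpow_le_lintegral_rpow_mul_weight _ hpq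
    (ENNReal.measurable_ofReal.comp_aemeasurable hg.aemeasurable)
    (ENNReal.measurable_ofReal.comp_aemeasurable hφ)
    (ae_restrict_of_forall_mem measurableSet_Ioc fun t ht =>
      (ENNReal.ofReal_pos.2 (hφ_pos t ht)).ne')
    (ae_restrict_of_forall_mem measurableSet_Ioc fun t _ => ENNReal.ofReal_ne_top)
  have hK : K ^ (p - 1) = c⁻¹ * ((p - 1) / γ) ^ (p - 1) := by
    rw [Real.mul_rpow (Real.rpow_nonneg hc.le _) (div_nonneg hp1.le hγ.le), ← Real.rpow_mul hc.le,
      show (1 - q) * (p - 1) = -1 by rw [hpq.conjugate_eq]; field_simp; ring, Real.rpow_neg_one]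
  have hf0 : 0 ≤ ∫ t in Ioc 0 1, g t := setIntegral_nonneg measurableSet_Ioc hg0
  have hF0 : 0 ≤ ∫ t in Ioc 0 1, g t ^ p * w t := setIntegral_nonneg measurableSet_Ioc hgw0
  have hK0 : 0 ≤ K := by positivity
  have hreal : (∫ t in Ioc 0 1, g t) ^ p ≤ (∫ t in Ioc 0 1, g t ^ p * w t) * K ^ (p - 1) := by
    rw [← ENNReal.ofReal_le_ofReal_iff (by positivity), ENNReal.ofReal_mul hF0,
      ← ENNReal.ofReal_rpow_of_nonneg hf0 hpq.nonneg, ← ENNReal.ofReal_rpow_of_nonneg hK0 hp1.le,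
      ← hf_eq]
    exact key.trans (mul_le_mul' hF_le (ENNReal.rpow_le_rpow
      (lintegral_Ioc_rpow_one_sub_conj_le hpq hc hγ hφ_lower) hp1.le))
  calc c * (∫ t in Ioc 0 1, g t) ^ p
      ≤ c * ((∫ t in Ioc 0 1, g t ^ p * w t) * K ^ (p - 1)) := by gcongr
    _ = ((p - 1) / γ) ^ (p - 1) * ∫ t in Ioc 0 1, g t ^ p * w t := by
      rw [hK]; field_simp

namespace ApStar

variable {p a c : ℝ} {w : ℝ → ℝ}

theorem rpow_mul_tail_add_le
    (hAp : ∀ t ∈ Ioc (0 : ℝ) 1, (∫ s in t..1, w s / s ^ p) + c ≤ a * w t / t ^ (p - 1))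
    {t : ℝ} (ht : t ∈ Ioc 0 1) : t ^ (p - 1) * ((∫ s in t..1, w s / s ^ p) + c) ≤ a * w t := by
  rw [mul_comm, ← le_div_iff₀ (Real.rpow_pos_of_pos ht.1 _)]
  exact hAp t ht

theorem tail_add_div_le
    (hAp : ∀ t ∈ Ioc (0 : ℝ) 1, (∫ s in t..1, w s / s ^ p) + c ≤ a * w t / t ^ (p - 1))
    {t : ℝ} (ht : t ∈ Ioc 0 1) : ((∫ s in t..1, w s / s ^ p) + c) / t ≤ a * (w t / t ^ p) := by
  have hrw : ((∫ s in t..1, w s / s ^ p) + c) / t =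
      t ^ (p - 1) * ((∫ s in t..1, w s / s ^ p) + c) / t ^ p := by
    rw [Real.rpow_sub_one ht.1.ne']
    field_simp [(Real.rpow_pos_of_pos ht.1 p).ne']
  rw [hrw, mul_div_assoc']
  exact div_le_div_of_nonneg_right (rpow_mul_tail_add_le hAp ht) (Real.rpow_nonneg ht.1.le _)

theorem le_rpow_mul_tail_add (ha : 0 < a)
    (hloc : ∀ t ∈ Ioc (0 : ℝ) 1, IntervalIntegrable (fun s => w s / s ^ p) volume t 1)
    (hAp : ∀ t ∈ Ioc (0 : ℝ) 1, (∫ s in t..1, w s / s ^ p) + c ≤ a * w t / t ^ (p - 1))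
    {t : ℝ} (ht : t ∈ Ioc 0 1) : c ≤ t ^ a⁻¹ * ((∫ s in t..1, w s / s ^ p) + c) := by
  set u : ℝ → ℝ := fun t => (∫ s in t..1, w s / s ^ p) + c
  have hu : ContinuousOn u (Icc t 1) :=
    ((continuousOn_primitive_left_Ioc hloc).add continuousOn_const).mono
      (Icc_subset_Ioc_iff ht.2 |>.2 ⟨ht.1, le_rfl⟩)
  have hgron : ∀ τ ∈ Icc t 1, c + a⁻¹ * ∫ s in τ..1, u s / s ≤ u τ := by
    intro τ hτ
    have hτ' : τ ∈ Ioc (0 : ℝ) 1 := ⟨ht.1.trans_le hτ.1, hτ.2⟩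
    have hmono := integral_mono_on hτ.2
      ((hu.mono (Icc_subset_Icc hτ.1 le_rfl)).div continuousOn_id
        (fun s hs => (hτ'.1.trans_le hs.1).ne') |>.intervalIntegrable_of_Icc hτ.2)
      ((hloc τ hτ').const_mul a)
      (fun s hs => tail_add_div_le hAp ⟨hτ'.1.trans_le hs.1, hs.2⟩)
    rw [intervalIntegral.integral_const_mul] at hmono
    have hdiv : a⁻¹ * ∫ s in τ..1, u s / s ≤ ∫ s in τ..1, w s / s ^ p := by
      rw [inv_mul_le_iff₀ ha]; exact hmono
    simp only [u]; linarith
  simpa using mul_rpow_le_rpow_mul_of_add_integral_div_le (inv_nonneg.2 ha.le) ht.1 ht.2 hu hgron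

end ApStar

theorem ApStar_domain_condition_general (p a c f F : ℝ) (hp : 1 < p)
    (ha : 0 < a) (hc : 0 < c) (w g : ℝ → ℝ)
    (hloc : ∀ t ∈ Set.Ioc (0 : ℝ) 1,
      IntervalIntegrable (fun s => w s / s ^ p) MeasureTheory.volume t 1)
    (hAp : ∀ t ∈ Set.Ioc (0 : ℝ) 1,
      (∫ s in t..1, w s / s ^ p) + c ≤ a * w t / t ^ (p - 1))
    (hg0 : ∀ t ∈ Set.Ioc (0 : ℝ) 1, 0 ≤ g t)
    (hgint : MeasureTheory.IntegrableOn g (Set.Ioc 0 1))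
    (hf : (∫ t in Set.Ioc (0 : ℝ) 1, g t) = f)
    (hFint : MeasureTheory.IntegrableOn (fun t => g t ^ p * w t) (Set.Ioc 0 1))
    (hF : (∫ t in Set.Ioc (0 : ℝ) 1, g t ^ p * w t) = F) :
    c * f ^ p ≤ (p - 1) ^ (p - 1) * a ^ p * F := by
  set u : ℝ → ℝ := fun t => (∫ s in t..1, w s / s ^ p) + c
  have hφ : ContinuousOn (fun t => t ^ (p - 1) * u t) (Ioc 0 1) :=
    (continuousOn_id.rpow_const fun t ht => Or.inl ht.1.ne').mul
      ((continuousOn_primitive_left_Ioc hloc).add continuousOn_const)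
  have hlower : ∀ t ∈ Ioc (0 : ℝ) 1, c * t ^ (p - 1 - a⁻¹) ≤ t ^ (p - 1) * u t := fun t ht =>
    calc c * t ^ (p - 1 - a⁻¹) ≤ t ^ a⁻¹ * u t * t ^ (p - 1 - a⁻¹) :=
          mul_le_mul_of_nonneg_right (ApStar.le_rpow_mul_tail_add ha hloc hAp ht)
            (Real.rpow_nonneg ht.1.le _)
      _ = t ^ (p - 1) * u t := by
          rw [mul_right_comm, ← Real.rpow_add ht.1, add_sub_cancel]
  have hFint' : IntegrableOn (fun t => g t ^ p * (a * w t)) (Ioc 0 1) :=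
    (hFint.const_mul a).congr (ae_of_all _ fun t => mul_left_comm a _ _)
  have key := mul_setIntegral_rpow_le_of_rpow_le_weight hp hc (inv_pos.2 ha)
    (hφ.aemeasurable measurableSet_Ioc) hlower (fun t ht => ApStar.rpow_mul_tail_add_le hAp ht)
    hg0 hgint hFint'
  simp_rw [hf, mul_left_comm _ a, MeasureTheory.integral_const_mul, hF] at key
  calc c * f ^ p ≤ ((p - 1) / a⁻¹) ^ (p - 1) * (a * F) := key
    _ = (p - 1) ^ (p - 1) * a ^ p * F := by
      rw [div_inv_eq_mul, Real.mul_rpow (sub_pos.2 hp).le ha.le, Real.rpow_sub_one ha.ne']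
      field_simp

/-- Let `w**` be an `A_p^*` weight with constants `a, c`, and let
`g : (0,1] → [0,∞)` be decreasing, right continuous, not a.e. zero, with
`∫_0^1 g = f` and `∫_0^1 g^p w** = F < ∞`. Then `c f^p ≤ (p-1)^(p-1) a^p F`. -/
theorem ApStar_domain_condition (p a c f F : ℝ) (hp : 1 < p)
    (ha : 0 < a) (hc : 0 < c) (w g : ℝ → ℝ)
    (hwpos : ∀ t ∈ Set.Ioc (0 : ℝ) 1, 0 < w t)
    (hloc : ∀ t ∈ Set.Ioc (0 : ℝ) 1,
      IntervalIntegrable (fun s => w s / s ^ p) MeasureTheory.volume t 1)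
    (hAp : ∀ t ∈ Set.Ioc (0 : ℝ) 1,
      (∫ s in t..1, w s / s ^ p) + c ≤ a * w t / t ^ (p - 1))
    (hlim : Filter.Tendsto (fun t : ℝ => t ^ p * ∫ s in t..1, w s / s ^ p)
      (nhdsWithin 0 (Set.Ioi 0)) (nhds 0))
    (hg0 : ∀ t ∈ Set.Ioc (0 : ℝ) 1, 0 ≤ g t)
    (hganti : AntitoneOn g (Set.Ioc 0 1))
    (hgrc : ∀ t ∈ Set.Ioc (0 : ℝ) 1, ContinuousWithinAt g (Set.Ici t) t)
    (hgne : ¬ (∀ᵐ t ∂(MeasureTheory.volume.restrict (Set.Ioc (0 : ℝ) 1)), g t = 0))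
    (hgint : MeasureTheory.IntegrableOn g (Set.Ioc 0 1))
    (hf : (∫ t in Set.Ioc (0 : ℝ) 1, g t) = f)
    (hFint : MeasureTheory.IntegrableOn (fun t => g t ^ p * w t) (Set.Ioc 0 1))
    (hF : (∫ t in Set.Ioc (0 : ℝ) 1, g t ^ p * w t) = F) :
    c * f ^ p ≤ (p - 1) ^ (p - 1) * a ^ p * F :=
  ApStar_domain_condition_general p a c f F hp ha hc w g hloc hAp hg0 hgint hf hFint hF
end

section
/- For A > B > 0 and p > 1, the infimum over β > 0 of (1 + 1/β)·[(β+1)^{p-1} A − B]/(p-1) equals A · ω_p(B/A)^p, where ω_p is the inverse of H_p(z) = -(p-1)z^p + p z^{p-1} on [1, p/(p-1)]. -/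
/-- For `A > B > 0` and `p > 1`, the infimum over `β > 0` of
`(1 + 1/β)((β+1)^(p-1) A − B)/(p-1)` equals `A ω_p(B/A)^p`, where `ω_p` is the
inverse of `H_p(z) = -(p-1)z^p + p z^(p-1)` on `[1, p/(p-1)]`. -/
theorem inf_over_beta_eq (p A B : ℝ) (hp : 1 < p) (hB : 0 < B) (hBA : B < A)
    (ω : ℝ → ℝ)
    (hmaps : Set.MapsTo ω (Set.Icc 0 1) (Set.Icc 1 (p / (p - 1))))
    (hleft : ∀ z ∈ Set.Icc (1 : ℝ) (p / (p - 1)),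
      ω (-(p - 1) * z ^ p + p * z ^ (p - 1)) = z)
    (hright : ∀ x ∈ Set.Icc (0 : ℝ) 1,
      -(p - 1) * (ω x) ^ p + p * (ω x) ^ (p - 1) = x) :
    sInf {y : ℝ | ∃ β > (0 : ℝ),
        y = (1 + 1 / β) * ((β + 1) ^ (p - 1) * A - B) / (p - 1)} =
      A * (ω (B / A)) ^ p := by
  have hA : 0 < A := hB.trans hBA
  have hp1 : (0:ℝ) < p - 1 := by linarith
  have hBA1 : B / A ∈ Set.Icc (0:ℝ) 1 := by
    constructor
    · positivity
    · exact le_of_lt ((div_lt_one hA).2 hBA)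
  set z := ω (B / A) with hzdef
  have hzIcc := hmaps hBA1
  have hz1 : 1 ≤ z := hzIcc.1
  have hz0 : 0 < z := lt_of_lt_of_le one_pos hz1
  have hHz : -(p - 1) * z ^ p + p * z ^ (p - 1) = B / A := hright _ hBA1
  have hBeq : B = A * (p * z ^ (p - 1) - (p - 1) * z ^ p) := by
    have h := hHz
    field_simp at h
    linarith [h]
  have hz1' : 1 < z := by
    rcases lt_or_eq_of_le hz1 with h | h
    · exact h
    · exfalso
      rw [← h] at hHz
      simp [Real.one_rpow] at hHz
      have h2 : B / A < 1 := (div_lt_one hA).2 hBA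
      rw [← hHz] at h2
      linarith
  -- relation z^p = z^(p-1) * z
  have hzp : z ^ p = z ^ (p - 1) * z := by
    nth_rewrite 1 [show p = (p - 1) + 1 by ring]
    rw [Real.rpow_add hz0, Real.rpow_one]
  -- key Young inequality: for t > 0, p * t * z^(p-1) ≤ t^p + (p-1) * z^p
  have young : ∀ t : ℝ, 0 < t → p * (t * z ^ (p - 1)) ≤ t ^ p + (p - 1) * z ^ p := by
    intro t ht
    have hpq : p.HolderConjugate (p / (p - 1)) :=
      (Real.holderConjugate_iff_eq_conjExponent hp).2 rfl
    have hY := Real.young_inequality_of_nonneg ht.le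
      (Real.rpow_nonneg hz0.le (p - 1)) hpq
    have hzz : (z ^ (p - 1)) ^ (p / (p - 1)) = z ^ p := by
      rw [← Real.rpow_mul hz0.le]
      congr 1
      field_simp
    rw [hzz] at hY
    have hp0 : (0:ℝ) < p := by linarith
    have h2 : z ^ p / (p / (p - 1)) = (p - 1) * z ^ p / p := by
      field_simp
    rw [h2] at hY
    calc p * (t * z ^ (p - 1)) ≤ p * (t ^ p / p + (p - 1) * z ^ p / p) := by
          exact mul_le_mul_of_nonneg_left hY hp0.le
      _ = t ^ p + (p - 1) * z ^ p := by field_simp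
  -- lower bound
  have lower : ∀ y ∈ {y : ℝ | ∃ β > (0 : ℝ),
      y = (1 + 1 / β) * ((β + 1) ^ (p - 1) * A - B) / (p - 1)},
      A * z ^ p ≤ y := by
    rintro y ⟨β, hβ, rfl⟩
    set t := β + 1 with htdef
    have ht : 0 < t := by positivity
    have htp : t ^ p = t ^ (p - 1) * t := by
      nth_rewrite 1 [show p = (p - 1) + 1 by ring]
      rw [Real.rpow_add ht, Real.rpow_one]
    have hY := young t ht
    -- rewrite goal
    have hform : (1 + 1 / β) * (t ^ (p - 1) * A - B) / (p - 1)
        = (t * (t ^ (p - 1) * A - B)) / (β * (p - 1)) := by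
      rw [htdef]
      field_simp
    rw [hform]
    rw [le_div_iff₀ (by positivity)]
    have key : t * (t ^ (p - 1) * A - B) - A * z ^ p * (β * (p - 1))
        = A * (t ^ p + (p - 1) * z ^ p - p * (t * z ^ (p - 1))) := by
      rw [hBeq, htp, htdef]
      ring
    nlinarith [mul_le_mul_of_nonneg_left hY hA.le]
  -- membership: β = z - 1 achieves the value
  have mem : A * z ^ p ∈ {y : ℝ | ∃ β > (0 : ℝ),
      y = (1 + 1 / β) * ((β + 1) ^ (p - 1) * A - B) / (p - 1)} := by
    refine ⟨z - 1, by linarith, ?_⟩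
    have hz1ne : z - 1 ≠ 0 := by linarith
    have hsimp : z - 1 + 1 = z := by ring
    rw [hsimp, hBeq]
    rw [hzp]
    field_simp
    ring
  refine le_antisymm (csInf_le ⟨A * z ^ p, lower⟩ mem) (le_csInf ⟨_, mem⟩ lower)
end

section
/- In the construction with parameter 0 < α < 1: let S be the family built from a tree T by choosing for each I ∈ S a family F(I) of pairwise almost disjoint tree elements inside I with total measure (1-α)μ(I), set A_I = I \ ∪F(I), and define ψ = Σ_{I∈S} λ γ^{r(I)} χ_{A_I} with λ > 0 and 0 < γ < 1/(1-α), where r(I) is the rank. Then for every I ∈ S, μ(I)^{-1} ∫_I ψ dμ = λα γ^{r(I)}/(1 - γ(1-α)). -/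
/-!
Along inclusion in `S` the rank can only increase: the layer identity with `m = 0` shows that
`I` is the only member of `S` inside `I` of rank `r I`. So the members of `S` inside `I` split
into the layers `r J = r I + m`, of total measure `(1 - α)^m μ(I)`, and summing
`μ(A_J) = α μ(J)` over them gives exactly `μ(I)`. As these pieces also cover `I` up to a null
set, they are a.e. disjoint; in particular `A_J ∩ I` is null whenever `I ⊊ J`, hence, by
nestedness, whenever `J ⊄ I`. Therefore
`∫_I ψ = ∑_{J ⊆ I} λ γ^(r J) α μ(J) = λ α γ^(r I) μ(I) ∑_m (γ (1 - α))^m`.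
-/

open MeasureTheory Function
open scoped ENNReal

theorem pairwise_aedisjoint_of_tsum_le_measure_iUnion {X ι : Type*} [MeasurableSpace X]
    [Countable ι] {μ : Measure X} {A : ι → Set X} (hA : ∀ i, MeasurableSet (A i))
    (hsum : ∑' i, μ (A i) ≤ μ (⋃ i, A i)) (hfin : μ (⋃ i, A i) ≠ ∞) :
    Pairwise (AEDisjoint μ on A) := by
  classical
  intro i j hij
  set B := Function.update A i (A i \ A j)
  have hB : ⋃ k, B k = ⋃ k, A k := by
    refine subset_antisymm (Set.iUnion_mono fun k => ?_) (Set.iUnion_subset fun k x hx => ?_)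
    · rcases eq_or_ne k i with rfl | hk
      · simp [B]
      · simp [B, hk]
    · rcases eq_or_ne k i with rfl | hk
      · by_cases hxj : x ∈ A j
        · exact Set.mem_iUnion.2 ⟨j, by simpa [B, hij.symm] using hxj⟩
        · exact Set.mem_iUnion.2 ⟨k, by simpa [B] using ⟨hx, hxj⟩⟩
      · exact Set.mem_iUnion.2 ⟨k, by simpa [B, hk] using hx⟩
  have hsplit : ∑' k, μ (A k) = ∑' k, μ (B k) + μ (A i ∩ A j) := by
    have : ∀ k, μ (A k) = μ (B k) + (Pi.single i (μ (A i ∩ A j)) : ι → ℝ≥0∞) k := by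
      intro k
      rcases eq_or_ne k i with rfl | hk
      · simpa [B] using (measure_sdiff_add_inter _ (hA j)).symm
      · simp [B, hk]
    simp only [this, ENNReal.tsum_add, tsum_pi_single]
  have hBle : ∑' k, μ (A k) ≤ ∑' k, μ (B k) :=
    calc ∑' k, μ (A k) ≤ μ (⋃ k, A k) := hsum
      _ = μ (⋃ k, B k) := by rw [hB]
      _ ≤ ∑' k, μ (B k) := measure_iUnion_le B
  have hBfin : ∑' k, μ (B k) ≠ ∞ :=
    ne_top_of_le_ne_top hfin ((le_self_add.trans hsplit.ge).trans hsum)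
  rw [hsplit] at hBle
  exact le_antisymm (ENNReal.le_of_add_le_add_left hBfin (by simpa using hBle)) bot_le

theorem ENNReal.tsum_ofReal_mul_pow {a ρ : ℝ} (ha : 0 ≤ a) (hρ0 : 0 ≤ ρ) (hρ1 : ρ < 1) :
    ∑' m : ℕ, ENNReal.ofReal (a * ρ ^ m) = ENNReal.ofReal (a / (1 - ρ)) := by
  rw [← ENNReal.ofReal_tsum_of_nonneg (fun m => by positivity)
    ((summable_geometric_of_lt_one hρ0 hρ1).mul_left a), tsum_mul_left,
    tsum_geometric_of_lt_one hρ0 hρ1, div_eq_mul_inv]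

theorem integral_tsum_mul_indicator_one {X ι : Type*} [MeasurableSpace X] [Countable ι]
    {μ : Measure X} {A : ι → Set X} (hA : ∀ i, MeasurableSet (A i)) {c : ι → ℝ}
    (hc : ∀ i, 0 ≤ c i) (hfin : ∑' i, ENNReal.ofReal (c i) * μ (A i) ≠ ∞) :
    ∫ x, ∑' i, c i * (A i).indicator (fun _ => (1 : ℝ)) x ∂μ =
      (∑' i, ENNReal.ofReal (c i) * μ (A i)).toReal := by
  have hterm : ∀ i, (fun x => c i * (A i).indicator (fun _ => (1 : ℝ)) x) =
      (A i).indicator (fun _ => c i) := fun i => by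
    ext x; by_cases hx : x ∈ A i <;> simp [hx]
  have hlint : ∀ i, ∫⁻ x, ‖c i * (A i).indicator (fun _ => (1 : ℝ)) x‖ₑ ∂μ =
      ENNReal.ofReal (c i) * μ (A i) := fun i => by
    calc ∫⁻ x, ‖c i * (A i).indicator (fun _ => (1 : ℝ)) x‖ₑ ∂μ
        = ∫⁻ x, (A i).indicator (fun _ => ENNReal.ofReal (c i)) x ∂μ :=
          lintegral_congr fun x => by
            by_cases hx : x ∈ A i <;> simp [hx, Real.enorm_of_nonneg (hc i)]
      _ = ENNReal.ofReal (c i) * μ (A i) := lintegral_indicator_const (hA i) _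
  rw [integral_tsum (fun i => ?_) (by simpa only [hlint] using hfin),
    ENNReal.tsum_toReal_eq (ENNReal.ne_top_of_tsum_ne_top hfin)]
  · refine tsum_congr fun i => ?_
    rw [hterm i, integral_indicator_const _ (hA i), smul_eq_mul, ENNReal.toReal_mul,
      ENNReal.toReal_ofReal (hc i), measureReal_def, mul_comm]
  · rw [hterm i]
    exact (measurable_const.indicator (hA i)).aestronglyMeasurable

namespace TreeConstruction

variable {X : Type*} {S : Set (Set X)} {F : Set X → Set (Set X)} {r : Set X → ℕ} {α : ℝ}
  {I J : Set X}

-- The set `A_I`; reducible so that rewriting sees through it to `I \ ⋃₀ F I`.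
abbrev piece (F : Set X → Set (Set X)) (I : Set X) : Set X := I \ ⋃₀ F I

theorem piece_subset : piece F I ⊆ I := Set.sdiff_subset

def descendants (S : Set (Set X)) (I : Set X) : Set (Set X) := {J ∈ S | J ⊆ I}

theorem iUnion_piece_descendants :
    ⋃ J : descendants S I, piece F J = ⋃₀ {A | ∃ J ∈ S, J ⊆ I ∧ A = J \ ⋃₀ F J} := by
  ext x
  simp only [Set.mem_sUnion, Set.mem_iUnion, Subtype.exists]
  constructor
  · rintro ⟨J, hJ, hx⟩
    exact ⟨_, ⟨J, hJ.1, hJ.2, rfl⟩, hx⟩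
  · rintro ⟨_, ⟨J, hJ, hJI, rfl⟩, hx⟩
    exact ⟨J, ⟨hJ, hJI⟩, hx⟩

variable [MeasurableSpace X] {μ : Measure X}

def HasGeometricLayers (μ : Measure X) (S : Set (Set X)) (r : Set X → ℕ) (α : ℝ) : Prop :=
  ∀ I ∈ S, ∀ m : ℕ, ∑' J : {J : Set X // J ∈ S ∧ J ⊆ I ∧ r J = r I + m}, μ J =
    ENNReal.ofReal ((1 - α) ^ m) * μ I

theorem measurableSet_piece (hSc : S.Countable) (hmeas : ∀ I ∈ S, MeasurableSet I)
    (hFS : ∀ I ∈ S, F I ⊆ S) (hI : I ∈ S) : MeasurableSet (piece F I) :=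
  (hmeas I hI).diff <| .sUnion (hSc.mono (hFS I hI)) fun J hJ => hmeas J (hFS I hI hJ)

variable [IsFiniteMeasure μ]

theorem eq_of_subset_of_rank_eq (hlayers : HasGeometricLayers μ S r α)
    (hpos : ∀ I ∈ S, 0 < μ I) (hI : I ∈ S) (hJ : J ∈ S) (hJI : J ⊆ I) (hr : r J = r I) :
    J = I := by
  classical
  by_contra hne
  let Layer := {K : Set X // K ∈ S ∧ K ⊆ I ∧ r K = r I + 0}
  let I' : Layer := ⟨I, hI, subset_rfl, rfl⟩
  let J' : Layer := ⟨J, hJ, hJI, hr⟩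
  have hIJ : I' ≠ J' := fun h => hne (congrArg Subtype.val h).symm
  have hle : μ I + μ J ≤ μ I + 0 :=
    calc μ I + μ J = ∑ K ∈ {I', J'}, μ K := by rw [Finset.sum_pair hIJ]
      _ ≤ ∑' K : Layer, μ K := ENNReal.sum_le_tsum _
      _ = μ I + 0 := by rw [hlayers I hI 0]; simp
  exact (hpos J hJ).ne' (nonpos_iff_eq_zero.1
    (ENNReal.le_of_add_le_add_left (measure_ne_top μ I) hle))

theorem rank_le_of_subset (hα : α < 1) (hlayers : HasGeometricLayers μ S r α)
    (hpos : ∀ I ∈ S, 0 < μ I) (hI : I ∈ S) (hJ : J ∈ S) (hJI : J ⊆ I) : r I ≤ r J := by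
  by_contra! hlt
  have hlayer_ne : ∑' K : {K : Set X // K ∈ S ∧ K ⊆ J ∧ r K = r J + (r I - r J)}, μ K ≠ 0 := by
    rw [hlayers J hJ]
    exact mul_ne_zero (ENNReal.ofReal_pos.2 (pow_pos (by linarith) _)).ne'
      (hpos J hJ).ne'
  obtain ⟨⟨K, hK, hKJ, hrK⟩, -⟩ := not_forall.1 (mt ENNReal.tsum_eq_zero.2 hlayer_ne)
  have hKI : K = I := eq_of_subset_of_rank_eq hlayers hpos hI hK (hKJ.trans hJI) (by omega)
  subst hKI
  exact hlt.ne (congrArg r (hJI.antisymm hKJ))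

theorem tsum_descendants_mul_measure (hα : α < 1) (hlayers : HasGeometricLayers μ S r α)
    (hpos : ∀ I ∈ S, 0 < μ I) (hI : I ∈ S) (w : ℕ → ℝ≥0∞) :
    ∑' J : descendants S I, w (r J - r I) * μ J =
      (∑' m, w m * ENNReal.ofReal ((1 - α) ^ m)) * μ I := by
  let depth : descendants S I → ℕ := fun J => r J - r I
  have hfiber : ∀ m, ∑' J : depth ⁻¹' {m}, μ J = ENNReal.ofReal ((1 - α) ^ m) * μ I := by
    intro m
    let e : depth ⁻¹' {m} ≃ {J : Set X // J ∈ S ∧ J ⊆ I ∧ r J = r I + m} :=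
      { toFun := fun J => ⟨J, J.1.2.1, J.1.2.2, by
          have := rank_le_of_subset hα hlayers hpos hI J.1.2.1 J.1.2.2
          have hm : r J - r I = m := J.2
          omega⟩
        invFun := fun J => ⟨⟨J, J.2.1, J.2.2.1⟩, by simp [depth, J.2.2.2]⟩
        left_inv := fun _ => rfl
        right_inv := fun _ => rfl }
    rw [← hlayers I hI m, ← e.tsum_eq]
    rfl
  rw [← ENNReal.tsum_fiberwise _ depth, ← ENNReal.tsum_mul_right]
  refine tsum_congr fun m => ?_
  rw [mul_assoc, ← hfiber, ← ENNReal.tsum_mul_left]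
  refine tsum_congr fun J => ?_
  rw [show r J - r I = m from J.2]

theorem tsum_descendants_geometric (hα : α < 1) (hlayers : HasGeometricLayers μ S r α)
    (hpos : ∀ I ∈ S, 0 < μ I) (hI : I ∈ S) {c γ : ℝ} (hc : 0 ≤ c) (hγ : 0 ≤ γ)
    (hγα : γ * (1 - α) < 1) :
    ∑' J : descendants S I, ENNReal.ofReal (c * γ ^ (r J - r I)) * μ J =
      ENNReal.ofReal (c / (1 - γ * (1 - α))) * μ I := by
  rw [tsum_descendants_mul_measure hα hlayers hpos hI fun m => ENNReal.ofReal (c * γ ^ m),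
    ← ENNReal.tsum_ofReal_mul_pow hc (by nlinarith) hγα]
  congr 1
  refine tsum_congr fun m => ?_
  rw [← ENNReal.ofReal_mul (by positivity), mul_pow, mul_assoc]

theorem tsum_measure_piece_descendants (hα0 : 0 < α) (hα1 : α < 1)
    (hlayers : HasGeometricLayers μ S r α) (hpos : ∀ I ∈ S, 0 < μ I)
    (hA : ∀ I ∈ S, μ (piece F I) = ENNReal.ofReal α * μ I) (hI : I ∈ S) :
    ∑' J : descendants S I, μ (piece F J) = μ I := by
  have h := tsum_descendants_geometric hα1 hlayers hpos hI hα0.le zero_le_one (by linarith)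
  simp only [one_pow, mul_one, one_mul, sub_sub_cancel, div_self hα0.ne',
    ENNReal.ofReal_one] at h
  rw [← h]
  exact tsum_congr fun J => hA J J.2.1

theorem pairwise_aedisjoint_piece (hSc : S.Countable)
    (hAmeas : ∀ I ∈ S, MeasurableSet (piece F I))
    (htotal : ∑' J : descendants S I, μ (piece F J) = μ I)
    (hcover : μ (I \ ⋃ J : descendants S I, piece F J) = 0) :
    Pairwise (AEDisjoint μ on fun J : descendants S I => piece F J) := by
  have : Countable (descendants S I) := (hSc.mono fun J hJ => hJ.1).to_subtype
  refine pairwise_aedisjoint_of_tsum_le_measure_iUnion (fun J => hAmeas J J.2.1) ?_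
    (measure_ne_top _ _)
  rw [htotal]
  exact measure_mono_ae (ae_le_set.2 hcover)

theorem measure_piece_inter_of_ssubset (hSc : S.Countable)
    (hAmeas : ∀ I ∈ S, MeasurableSet (piece F I))
    (htotal : ∀ I ∈ S, ∑' J : descendants S I, μ (piece F J) = μ I)
    (hcover : ∀ I ∈ S, μ (I \ ⋃ J : descendants S I, piece F J) = 0) (hI : I ∈ S) (hJ : J ∈ S)
    (hIJ : I ⊂ J) : μ (piece F J ∩ I) = 0 := by
  have : Countable (descendants S I) := (hSc.mono fun J hJ => hJ.1).to_subtype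
  have hdisj := pairwise_aedisjoint_piece hSc hAmeas (htotal J hJ) (hcover J hJ)
  set U := ⋃ L : descendants S I, piece F L
  have hsub : piece F J ∩ I ⊆ (I \ U) ∪ ⋃ L : descendants S I, piece F J ∩ piece F L := by
    rintro x ⟨hxJ, hxI⟩
    by_cases hxU : x ∈ U
    · obtain ⟨L, hxL⟩ := Set.mem_iUnion.1 hxU
      exact Or.inr (Set.mem_iUnion.2 ⟨L, hxJ, hxL⟩)
    · exact Or.inl ⟨hxI, hxU⟩
  refine measure_mono_null hsub (measure_union_null (hcover I hI) (measure_iUnion_null fun L => ?_))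
  have hLJ : (⟨J, hJ, subset_rfl⟩ : descendants S J) ≠ ⟨L, L.2.1, L.2.2.trans hIJ.subset⟩ :=
    fun h => hIJ.not_subset (by rw [show J = L from congrArg Subtype.val h]; exact L.2.2)
  exact hdisj hLJ

theorem measure_piece_inter (hA : ∀ I ∈ S, μ (piece F I) = ENNReal.ofReal α * μ I)
    (hSc : S.Countable) (hAmeas : ∀ I ∈ S, MeasurableSet (piece F I))
    (htotal : ∀ I ∈ S, ∑' J : descendants S I, μ (piece F J) = μ I)
    (hcover : ∀ I ∈ S, μ (I \ ⋃ J : descendants S I, piece F J) = 0)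
    (hnested : ∀ I ∈ S, ∀ J ∈ S, I ⊆ J ∨ J ⊆ I ∨ μ (I ∩ J) = 0) (hI : I ∈ S) (hJ : J ∈ S) :
    μ (piece F J ∩ I) = (descendants S I).indicator (fun K => ENNReal.ofReal α * μ K) J := by
  by_cases hJI : J ⊆ I
  · rw [Set.indicator_of_mem (show J ∈ descendants S I from ⟨hJ, hJI⟩),
      Set.inter_eq_left.2 (piece_subset.trans hJI), hA J hJ]
  rw [Set.indicator_of_notMem fun h => hJI h.2]
  rcases hnested J hJ I hI with hJI' | hIJ | hnull
  · exact absurd hJI' hJI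
  · exact measure_piece_inter_of_ssubset hSc hAmeas htotal hcover hI hJ
      (hIJ.ssubset_of_not_subset hJI)
  · exact measure_mono_null (Set.inter_subset_inter_left _ piece_subset) hnull

theorem tsum_mul_measure_piece_inter (hα0 : 0 ≤ α) (hα1 : α < 1)
    (hlayers : HasGeometricLayers μ S r α) (hpos : ∀ I ∈ S, 0 < μ I)
    (hA : ∀ I ∈ S, μ (piece F I) = ENNReal.ofReal α * μ I) (hSc : S.Countable)
    (hAmeas : ∀ I ∈ S, MeasurableSet (piece F I))
    (htotal : ∀ I ∈ S, ∑' J : descendants S I, μ (piece F J) = μ I)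
    (hcover : ∀ I ∈ S, μ (I \ ⋃ J : descendants S I, piece F J) = 0)
    (hnested : ∀ I ∈ S, ∀ J ∈ S, I ⊆ J ∨ J ⊆ I ∨ μ (I ∩ J) = 0) (hI : I ∈ S)
    {lam γ : ℝ} (hlam : 0 ≤ lam) (hγ : 0 ≤ γ) (hγα : γ * (1 - α) < 1) :
    ∑' J : S, ENNReal.ofReal (lam * γ ^ r J) * μ (piece F J ∩ I) =
      ENNReal.ofReal (lam * α * γ ^ r I / (1 - γ * (1 - α))) * μ I := by
  let term : Set X → ℝ≥0∞ := fun J => ENNReal.ofReal (lam * α * γ ^ r I * γ ^ (r J - r I)) * μ J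
  have hterm : ∀ J ∈ S, ENNReal.ofReal (lam * γ ^ r J) * μ (piece F J ∩ I) =
      (descendants S I).indicator term J := by
    intro J hJ
    rw [measure_piece_inter hA hSc hAmeas htotal hcover hnested hI hJ]
    by_cases hJI : J ∈ descendants S I
    · have hrank := rank_le_of_subset hα1 hlayers hpos hI hJ hJI.2
      rw [Set.indicator_of_mem hJI, Set.indicator_of_mem hJI, ← mul_assoc,
        ← ENNReal.ofReal_mul (by positivity)]
      congr 2
      rw [mul_assoc, mul_assoc, ← pow_add, Nat.add_sub_cancel' hrank]
      ring
    · simp [Set.indicator_of_notMem hJI]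
  calc ∑' J : S, ENNReal.ofReal (lam * γ ^ r J) * μ (piece F J ∩ I)
      = ∑' J : S, (descendants S I).indicator term J := tsum_congr fun J => hterm J J.2
    _ = ∑' J : descendants S I, term J := by
      rw [tsum_subtype, tsum_subtype, Set.indicator_indicator,
        Set.inter_eq_right.2 fun J hJ => hJ.1]
    _ = _ := tsum_descendants_geometric hα1 hlayers hpos hI (by positivity) hγ hγα

end TreeConstruction

open TreeConstruction

theorem construction_average_general {X : Type*} [MeasurableSpace X] (μ : Measure X)
    [IsProbabilityMeasure μ]
    (α lam γ : ℝ) (hα0 : 0 < α) (hα1 : α < 1) (hlam : 0 < lam)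
    (hγ0 : 0 < γ) (hγ1 : γ < 1 / (1 - α))
    (S : Set (Set X)) (F : Set X → Set (Set X)) (r : Set X → ℕ)
    (hSc : S.Countable)
    (hmeas : ∀ I ∈ S, MeasurableSet I)
    (hpos : ∀ I ∈ S, 0 < μ I)
    (hFS : ∀ I ∈ S, F I ⊆ S)
    (hnested : ∀ I ∈ S, ∀ J ∈ S, I ⊆ J ∨ J ⊆ I ∨ μ (I ∩ J) = 0)
    (hA : ∀ I ∈ S, μ (I \ ⋃₀ F I) = ENNReal.ofReal α * μ I)
    (hdecomp : ∀ I ∈ S, μ (I \ ⋃₀ {A : Set X | ∃ J ∈ S, J ⊆ I ∧ A = J \ ⋃₀ F J}) = 0)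
    (hsum : ∀ I ∈ S, ∀ m : ℕ,
      ∑' J : {J : Set X // J ∈ S ∧ J ⊆ I ∧ r J = r I + m}, μ (J : Set X) =
        ENNReal.ofReal ((1 - α) ^ m) * μ I) :
    ∀ I ∈ S,
      ((μ I).toReal)⁻¹ *
        (∫ x in I, (∑' J : S, lam * γ ^ r (J : Set X) *
          Set.indicator ((J : Set X) \ ⋃₀ F (J : Set X)) (fun _ => (1 : ℝ)) x) ∂μ) =
      lam * α * γ ^ r I / (1 - γ * (1 - α)) := by
  intro I hI
  have : Countable S := hSc.to_subtype
  have hγα : γ * (1 - α) < 1 := (lt_div_iff₀ (by linarith)).1 hγ1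
  have hAmeas : ∀ J ∈ S, MeasurableSet (piece F J) := fun J hJ =>
    measurableSet_piece hSc hmeas hFS hJ
  have hcover : ∀ J ∈ S, μ (J \ ⋃ K : descendants S J, piece F K) = 0 := by
    intro J hJ
    rw [iUnion_piece_descendants]
    exact hdecomp J hJ
  have htotal : ∀ J ∈ S, ∑' K : descendants S J, μ (piece F K) = μ J := fun J hJ =>
    tsum_measure_piece_descendants hα0 hα1 hsum hpos hA hJ
  have hkey := tsum_mul_measure_piece_inter hα0.le hα1 hsum hpos hA hSc hAmeas htotal hcover
    hnested hI hlam.le hγ0.le hγα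
  have hμI : (μ I).toReal ≠ 0 := ENNReal.toReal_ne_zero.2 ⟨(hpos I hI).ne', measure_ne_top μ I⟩
  have hrestrict : ∀ J : S, μ.restrict I (piece F J) = μ (piece F J ∩ I) := fun J =>
    Measure.restrict_apply (hAmeas J J.2)
  simp only [← hrestrict] at hkey
  rw [integral_tsum_mul_indicator_one (fun J : S => hAmeas J J.2) (fun J => by positivity)
    (hkey ▸ ENNReal.mul_ne_top ENNReal.ofReal_ne_top (measure_ne_top μ I)), hkey,
    ENNReal.toReal_mul, ENNReal.toReal_ofReal (div_nonneg (by positivity) (by linarith))]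
  field_simp

/-- In the construction with parameter `0 < α < 1`: `S` is a family of
sets built from a tree, where each `I ∈ S` carries a family `F I ⊆ S` of pairwise
a.e. disjoint members of `I` of total measure `(1-α)μ(I)`; `A_I = I \ ⋃ F(I)` has
`μ(A_I) = αμ(I)`; ranks satisfy `r(univ)=0`, `r(J)=r(I)+1` for `J ∈ F I`, and
`Σ_{S∋J⊆I, r(J)=r(I)+m} μ(J) = (1-α)^m μ(I)`. For
`ψ = Σ_{I∈S} λ γ^(r I) χ_{A_I}` with `λ > 0`, `0 < γ < 1/(1-α)`, every `I ∈ S`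
satisfies `μ(I)⁻¹ ∫_I ψ dμ = λ α γ^(r I) / (1 - γ(1-α))`. -/
theorem construction_average {X : Type*} [MeasurableSpace X] (μ : Measure X)
    [IsProbabilityMeasure μ]
    (hna : ∀ s : Set X, MeasurableSet s → μ s ≠ 0 →
      ∃ t ⊆ s, MeasurableSet t ∧ 0 < μ t ∧ μ t < μ s)
    (α lam γ : ℝ) (hα0 : 0 < α) (hα1 : α < 1) (hlam : 0 < lam)
    (hγ0 : 0 < γ) (hγ1 : γ < 1 / (1 - α))
    (S : Set (Set X)) (F : Set X → Set (Set X)) (r : Set X → ℕ)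
    (hSc : S.Countable)
    (hmeas : ∀ I ∈ S, MeasurableSet I)
    (hpos : ∀ I ∈ S, 0 < μ I)
    (hXS : Set.univ ∈ S)
    (hFS : ∀ I ∈ S, F I ⊆ S)
    (hFsub : ∀ I ∈ S, ∀ J ∈ F I, J ⊆ I)
    (hFdisj : ∀ I ∈ S, ∀ J ∈ F I, ∀ K ∈ F I, J ≠ K → μ (J ∩ K) = 0)
    (hFmeasure : ∀ I ∈ S, μ (⋃₀ F I) = ENNReal.ofReal (1 - α) * μ I)
    (hnested : ∀ I ∈ S, ∀ J ∈ S, I ⊆ J ∨ J ⊆ I ∨ μ (I ∩ J) = 0)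
    (hA : ∀ I ∈ S, μ (I \ ⋃₀ F I) = ENNReal.ofReal α * μ I)
    (hr0 : r Set.univ = 0)
    (hr : ∀ I ∈ S, ∀ J ∈ F I, r J = r I + 1)
    (hdecomp : ∀ I ∈ S, μ (I \ ⋃₀ {A : Set X | ∃ J ∈ S, J ⊆ I ∧ A = J \ ⋃₀ F J}) = 0)
    (hsum : ∀ I ∈ S, ∀ m : ℕ,
      ∑' J : {J : Set X // J ∈ S ∧ J ⊆ I ∧ r J = r I + m}, μ (J : Set X) =
        ENNReal.ofReal ((1 - α) ^ m) * μ I) :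
    ∀ I ∈ S,
      ((μ I).toReal)⁻¹ *
        (∫ x in I, (∑' J : S, lam * γ ^ r (J : Set X) *
          Set.indicator ((J : Set X) \ ⋃₀ F (J : Set X)) (fun _ => (1 : ℝ)) x) ∂μ) =
      lam * α * γ ^ r I / (1 - γ * (1 - α)) :=
  construction_average_general μ α lam γ hα0 hα1 hlam hγ0 hγ1 S F r hSc hmeas hpos hFS hnested hA
    hdecomp hsum
end

section
/- In the same construction, the weight w_α = Σ_{I∈S} λ₂ γ₂^{r(I)} χ_{A_I} (with λ₂ > 0, 0 < γ₂, γ₂^{-1/(p-1)} < 1/(1-α)) satisfies, for every I ∈ S, w_α(I)·(∫_I w_α^{-1/(p-1)} dμ)^{p-1}/μ(I)^p = α^p / ([1 - γ₂(1-α)]·[1 - γ₂^{-1/(p-1)}(1-α)]^{p-1}); in particular w_α is an A_p weight with respect to the tree S with this constant. -/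
/-!
The weight is a step function, equal to `λ γ ^ r J` on the tile `A_J = J \ ⋃₀ F J`. Comparing
masses in `Σ_{J ⊆ I, r J = r I + m} μ J = (1 - α) ^ m μ I` shows that ranks strictly increase along
proper inclusions and that a proper sub-element of `I` lies in a child of `I`; hence the tiles are
a.e. disjoint, and `A_J` meets `I` in a null set unless `J ⊆ I`. Grouping the `J ⊆ I` by rank, the
integral over `I` of the step function with parameters `λ, γ` is the geometric series
`Σ_m λ γ ^ (r I + m) α (1 - α) ^ m μ I = λ α γ ^ r I μ I / (1 - γ (1 - α))`. As the tiles are a.e.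
disjoint, `w ^ (-1/(p-1))` is the step function with parameters `λ ^ (-1/(p-1))`, `γ ^ (-1/(p-1))`,
and in the product of the two averages the powers of `λ γ ^ r I` cancel.
-/

open MeasureTheory Set
open scoped ENNReal

theorem ENNReal.eq_zero_of_tsum_le_tsum_subset {β : Type*} {f : β → ℝ≥0∞} {s t : Set β}
    (hst : s ⊆ t) (hle : ∑' x : t, f x ≤ ∑' x : s, f x) (hfin : ∑' x : s, f x ≠ ∞)
    {a : β} (ha : a ∈ t \ s) : f a = 0 := by
  have hsplit : ∑' x : t, f x = ∑' x : s, f x + ∑' x : ↥(t \ s), f x := by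
    rw [← ENNReal.summable.tsum_union_disjoint disjoint_sdiff_right ENNReal.summable,
      union_sdiff_cancel hst]
  have hrest : ∑' x : ↥(t \ s), f x = 0 := by
    rw [hsplit, ← add_zero (∑' x : s, f x), add_assoc, zero_add] at hle
    exact nonpos_iff_eq_zero.1 (ENNReal.le_of_add_le_add_left hfin hle)
  exact ENNReal.tsum_eq_zero.1 hrest ⟨a, ha⟩

theorem comp_tsum_mul_indicator_of_subsingleton {X ι : Type*} {s : ι → Set X} {x : X}
    (hx : ∀ i j, x ∈ s i → x ∈ s j → i = j) (c : ι → ℝ) {g : ℝ → ℝ} (hg : g 0 = 0) :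
    g (∑' i, c i * (s i).indicator (fun _ => 1) x) =
      ∑' i, g (c i) * (s i).indicator (fun _ => 1) x := by
  by_cases hmem : ∃ i, x ∈ s i
  · obtain ⟨i, hi⟩ := hmem
    have hvanish : ∀ j ≠ i, x ∉ s j := fun j hj hxj => hj (hx j i hxj hi)
    rw [tsum_eq_single i fun j hj => by simp [hvanish j hj],
      tsum_eq_single i fun j hj => by simp [hvanish j hj]]
    simp [hi]
  · push Not at hmem
    simp [hmem, hg]

section Indicator

variable {X ι : Type*} [MeasurableSpace X] {μ : Measure X} [Countable ι] {s : ι → Set X}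

theorem ae_comp_tsum_mul_indicator (hs : Pairwise (Function.onFun (AEDisjoint μ) s))
    (c : ι → ℝ) {g : ℝ → ℝ} (hg : g 0 = 0) :
    (fun x => g (∑' i, c i * (s i).indicator (fun _ => 1) x)) =ᵐ[μ]
      fun x => ∑' i, g (c i) * (s i).indicator (fun _ => 1) x := by
  have hnull : μ (⋃ (i) (j) (_ : i ≠ j), s i ∩ s j) = 0 :=
    measure_iUnion_null fun i => measure_iUnion_null fun j => measure_iUnion_null (hs ·)
  filter_upwards [measure_eq_zero_iff_ae_notMem.1 hnull] with x hx
  refine comp_tsum_mul_indicator_of_subsingleton (fun i j hi hj => ?_) c hg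
  by_contra hij
  exact hx (mem_iUnion₂.2 ⟨i, j, mem_iUnion.2 ⟨hij, hi, hj⟩⟩)

theorem integral_tsum_mul_indicator (hs : ∀ i, MeasurableSet (s i)) {c : ι → ℝ}
    (hc : ∀ i, 0 ≤ c i) (hfin : ∑' i, ENNReal.ofReal (c i) * μ (s i) ≠ ∞) :
    ∫ x, ∑' i, c i * (s i).indicator (fun _ => 1) x ∂μ =
      (∑' i, ENNReal.ofReal (c i) * μ (s i)).toReal := by
  have hterm : ∀ i, ∫⁻ x, ‖c i * (s i).indicator (fun _ => (1 : ℝ)) x‖ₑ ∂μ =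
      ENNReal.ofReal (c i) * μ (s i) := by
    intro i
    have hpt : ∀ x, ‖c i * (s i).indicator (fun _ => (1 : ℝ)) x‖ₑ =
        (s i).indicator (fun _ => ENNReal.ofReal (c i)) x := fun x => by
      by_cases hx : x ∈ s i <;> simp [hx, Real.enorm_of_nonneg (hc i)]
    simp only [hpt, lintegral_indicator_const (hs i)]
  rw [integral_tsum
      (fun i => ((measurable_const.indicator (hs i)).const_mul _).aestronglyMeasurable)
      (by simpa only [hterm] using hfin),
    ENNReal.tsum_toReal_eq (ENNReal.ne_top_of_tsum_ne_top hfin)]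
  refine tsum_congr fun i => ?_
  rw [integral_const_mul, integral_indicator_const _ (hs i), ENNReal.toReal_mul,
    ENNReal.toReal_ofReal (hc i), measureReal_def, smul_eq_mul, mul_one]

end Indicator

section Tree

variable {X : Type*} [MeasurableSpace X] {μ : Measure X} {α : ℝ} {S : Set (Set X)}
  {F : Set X → Set (Set X)} {r : Set X → ℕ}

def descendants (S : Set (Set X)) (r : Set X → ℕ) (I : Set X) (m : ℕ) : Set (Set X) :=
  {J | J ∈ S ∧ J ⊆ I ∧ r J = r I + m}

theorem descendants_nonempty (hα1 : α < 1) (hpos : ∀ I ∈ S, 0 < μ I)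
    (hsum : ∀ I ∈ S, ∀ m : ℕ,
      ∑' J : descendants S r I m, μ J = ENNReal.ofReal ((1 - α) ^ m) * μ I)
    {I : Set X} (hI : I ∈ S) (m : ℕ) : (descendants S r I m).Nonempty := by
  have hne : ∑' J : descendants S r I m, μ J ≠ 0 := by
    rw [hsum I hI m]
    exact mul_ne_zero (ENNReal.ofReal_pos.2 (pow_pos (by linarith) m)).ne' (hpos I hI).ne'
  obtain ⟨J, -⟩ := not_forall.1 (mt ENNReal.tsum_eq_zero.2 hne)
  exact ⟨J, J.2⟩

theorem eq_of_mem_descendants_zero [IsFiniteMeasure μ] (hpos : ∀ I ∈ S, 0 < μ I)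
    (hsum : ∀ I ∈ S, ∀ m : ℕ,
      ∑' J : descendants S r I m, μ J = ENNReal.ofReal ((1 - α) ^ m) * μ I)
    {I K : Set X} (hI : I ∈ S) (hK : K ∈ descendants S r I 0) : K = I := by
  by_contra hKI
  have hself : I ∈ descendants S r I 0 := ⟨hI, subset_rfl, rfl⟩
  have hle : ∑' J : descendants S r I 0, μ J ≤ ∑' J : ({I} : Set (Set X)), μ J := by
    simp [hsum I hI 0]
  exact (hpos K hK.1).ne' (ENNReal.eq_zero_of_tsum_le_tsum_subset
    (singleton_subset_iff.2 hself) hle (by simp [measure_ne_top]) ⟨hK, hKI⟩)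

theorem rank_lt_of_ssubset [IsFiniteMeasure μ] (hα1 : α < 1) (hpos : ∀ I ∈ S, 0 < μ I)
    (hsum : ∀ I ∈ S, ∀ m : ℕ,
      ∑' J : descendants S r I m, μ J = ENNReal.ofReal ((1 - α) ^ m) * μ I)
    {I K : Set X} (hI : I ∈ S) (hK : K ∈ S) (hKI : K ⊂ I) : r I < r K := by
  by_contra! hle
  obtain ⟨L, hLS, hLK, hrL⟩ := descendants_nonempty hα1 hpos hsum hK (r I - r K)
  have hLI : L = I :=
    eq_of_mem_descendants_zero hpos hsum hI ⟨hLS, hLK.trans hKI.subset, by omega⟩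
  exact hKI.2 (hLI ▸ hLK)

theorem exists_mem_descendants [IsFiniteMeasure μ] (hα1 : α < 1) (hpos : ∀ I ∈ S, 0 < μ I)
    (hsum : ∀ I ∈ S, ∀ m : ℕ,
      ∑' J : descendants S r I m, μ J = ENNReal.ofReal ((1 - α) ^ m) * μ I)
    {I K : Set X} (hI : I ∈ S) (hK : K ∈ S) (hKI : K ⊆ I) :
    ∃ m, K ∈ descendants S r I m := by
  rcases hKI.eq_or_ssubset with rfl | hKI
  · exact ⟨0, hK, subset_rfl, rfl⟩
  · have := rank_lt_of_ssubset hα1 hpos hsum hI hK hKI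
    exact ⟨r K - r I, hK, hKI.subset, by omega⟩

theorem exists_child_mem_descendants [IsFiniteMeasure μ] (hα1 : α < 1) (hpos : ∀ I ∈ S, 0 < μ I)
    (hFS : ∀ I ∈ S, F I ⊆ S) (hFsub : ∀ I ∈ S, ∀ J ∈ F I, J ⊆ I)
    (hFdisj : ∀ I ∈ S, ∀ J ∈ F I, ∀ K ∈ F I, J ≠ K → μ (J ∩ K) = 0)
    (hr : ∀ I ∈ S, ∀ J ∈ F I, r J = r I + 1)
    (hchildren : ∀ I ∈ S, ∑' C : F I, μ C = ENNReal.ofReal (1 - α) * μ I)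
    (hsum : ∀ I ∈ S, ∀ m : ℕ,
      ∑' J : descendants S r I m, μ J = ENNReal.ofReal ((1 - α) ^ m) * μ I)
    {I K : Set X} (hI : I ∈ S) {m : ℕ} (hK : K ∈ descendants S r I (m + 1)) :
    ∃ C ∈ F I, K ∈ descendants S r C m := by
  have hdisj : (F I).PairwiseDisjoint (descendants S r · m) := fun C hC C' hC' hCC' =>
    disjoint_left.2 fun J hJ hJ' => (hpos J hJ.1).ne' <|
      measure_mono_null (subset_inter hJ.2.1 hJ'.2.1) (hFdisj I hI C hC C' hC' hCC')
  have hsub : (⋃ C ∈ F I, descendants S r C m) ⊆ descendants S r I (m + 1) :=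
    iUnion₂_subset fun C hC J hJ =>
      ⟨hJ.1, hJ.2.1.trans (hFsub I hI C hC), by rw [hJ.2.2, hr I hI C hC]; ring⟩
  have hmass : ∑' J : ↥(⋃ C ∈ F I, descendants S r C m), μ J =
      ∑' J : descendants S r I (m + 1), μ J := by
    rw [ENNReal.tsum_biUnion' hdisj, tsum_congr fun C : F I => hsum C (hFS I hI C.2) m,
      ENNReal.tsum_mul_left, hchildren I hI, hsum I hI, ← mul_assoc,
      ← ENNReal.ofReal_mul (pow_nonneg (by linarith) m), pow_succ]
  by_contra! hnot
  refine (hpos K hK.1).ne' (ENNReal.eq_zero_of_tsum_le_tsum_subset hsub hmass.ge ?_ ⟨hK, ?_⟩)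
  · rw [hmass, hsum I hI]
    exact ENNReal.mul_ne_top ENNReal.ofReal_ne_top (measure_ne_top μ I)
  · simpa using hnot

theorem subset_sUnion_children [IsFiniteMeasure μ] (hα1 : α < 1) (hpos : ∀ I ∈ S, 0 < μ I)
    (hFS : ∀ I ∈ S, F I ⊆ S) (hFsub : ∀ I ∈ S, ∀ J ∈ F I, J ⊆ I)
    (hFdisj : ∀ I ∈ S, ∀ J ∈ F I, ∀ K ∈ F I, J ≠ K → μ (J ∩ K) = 0)
    (hr : ∀ I ∈ S, ∀ J ∈ F I, r J = r I + 1)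
    (hchildren : ∀ I ∈ S, ∑' C : F I, μ C = ENNReal.ofReal (1 - α) * μ I)
    (hsum : ∀ I ∈ S, ∀ m : ℕ,
      ∑' J : descendants S r I m, μ J = ENNReal.ofReal ((1 - α) ^ m) * μ I)
    {I K : Set X} (hI : I ∈ S) (hK : K ∈ S) (hKI : K ⊂ I) : K ⊆ ⋃₀ F I := by
  have hlt := rank_lt_of_ssubset hα1 hpos hsum hI hK hKI
  obtain ⟨C, hC, hKC⟩ := exists_child_mem_descendants hα1 hpos hFS hFsub hFdisj hr hchildren
    hsum hI (m := r K - r I - 1) ⟨hK, hKI.subset, by omega⟩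
  exact subset_sUnion_of_subset _ C hKC.2.1 hC

theorem aedisjoint_diff_sUnion (hnested : ∀ I ∈ S, ∀ J ∈ S, I ⊆ J ∨ J ⊆ I ∨ μ (I ∩ J) = 0)
    (hcover : ∀ I ∈ S, ∀ K ∈ S, K ⊂ I → K ⊆ ⋃₀ F I) :
    Pairwise (Function.onFun (AEDisjoint μ) fun J : S => (J : Set X) \ ⋃₀ F J) := by
  rintro ⟨J, hJ⟩ ⟨K, hK⟩ hJK
  have hJK : J ≠ K := fun h => hJK (Subtype.ext h)
  rcases hnested J hJ K hK with hsub | hsub | hnull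
  · have := hcover K hK J hJ (hsub.ssubset_of_ne hJK)
    exact measure_mono_null (fun x hx => absurd (this hx.1.1) hx.2.2) measure_empty
  · have := hcover J hJ K hK (hsub.ssubset_of_ne hJK.symm)
    exact measure_mono_null (fun x hx => absurd (this hx.2.1) hx.1.2) measure_empty
  · exact measure_mono_null (inter_subset_inter sdiff_subset sdiff_subset) hnull

theorem measure_diff_sUnion_inter_eq_zero
    (hnested : ∀ I ∈ S, ∀ J ∈ S, I ⊆ J ∨ J ⊆ I ∨ μ (I ∩ J) = 0)
    (hcover : ∀ I ∈ S, ∀ K ∈ S, K ⊂ I → K ⊆ ⋃₀ F I) {I J : Set X} (hI : I ∈ S) (hJ : J ∈ S)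
    (hJI : ¬J ⊆ I) : μ ((J \ ⋃₀ F J) ∩ I) = 0 := by
  rcases hnested J hJ I hI with hsub | hsub | hnull
  · exact absurd hsub hJI
  · have := hcover J hJ I hI (hsub.ssubset_of_ne fun h => hJI h.ge)
    exact measure_mono_null (fun x hx => absurd (this hx.2) hx.1.2) measure_empty
  · exact measure_mono_null (inter_subset_inter_left _ sdiff_subset) hnull

theorem tsum_ofReal_mul_measure_diff_sUnion_inter (hα0 : 0 ≤ α) (hα1 : α ≤ 1)
    (hA : ∀ I ∈ S, μ (I \ ⋃₀ F I) = ENNReal.ofReal α * μ I)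
    (hsum : ∀ I ∈ S, ∀ m : ℕ,
      ∑' J : descendants S r I m, μ J = ENNReal.ofReal ((1 - α) ^ m) * μ I)
    {I : Set X} (hI : I ∈ S) (hout : ∀ J ∈ S, ¬J ⊆ I → μ ((J \ ⋃₀ F J) ∩ I) = 0)
    (hdesc : ∀ J ∈ S, J ⊆ I → ∃ m, J ∈ descendants S r I m)
    {lam gam : ℝ} (hlam : 0 ≤ lam) (hgam : 0 ≤ gam) (hq : gam * (1 - α) < 1) :
    ∑' J : S, ENNReal.ofReal (lam * gam ^ r J) * μ ((J \ ⋃₀ F J) ∩ I) =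
      ENNReal.ofReal (lam * gam ^ r I * α / (1 - gam * (1 - α))) * μ I := by
  set g : Set X → ℝ≥0∞ := fun J => ENNReal.ofReal (lam * gam ^ r J) * μ ((J \ ⋃₀ F J) ∩ I)
  have hq0 : 0 ≤ gam * (1 - α) := mul_nonneg hgam (by linarith)
  have hsupp : S.indicator g = (⋃ m, descendants S r I m).indicator g := by
    ext J
    by_cases hJ : J ∈ ⋃ m, descendants S r I m
    · obtain ⟨m, hm⟩ := mem_iUnion.1 hJ
      rw [indicator_of_mem hm.1, indicator_of_mem hJ]
    rw [indicator_of_notMem hJ]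
    by_cases hJS : J ∈ S
    · have hJI : ¬J ⊆ I := fun hJI => hJ (mem_iUnion.2 (hdesc J hJS hJI))
      simp [g, hJS, hout J hJS hJI]
    · exact indicator_of_notMem hJS g
  have hdisj : (univ : Set ℕ).PairwiseDisjoint (descendants S r I) :=
    fun _ _ _ _ hmn => disjoint_left.2 fun _ hm hn =>
      hmn (Nat.add_left_cancel (hm.2.2.symm.trans hn.2.2))
  have hlayer : ∀ m, ∑' J : descendants S r I m, g J =
      ENNReal.ofReal (lam * gam ^ r I * α * (gam * (1 - α)) ^ m) * μ I := by
    intro m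
    have hg : ∀ J : descendants S r I m,
        g J = ENNReal.ofReal (lam * gam ^ (r I + m) * α) * μ J := by
      rintro ⟨J, hJS, hJI, hrJ⟩
      simp only [g, inter_eq_left.2 (sdiff_subset.trans hJI), hA J hJS, hrJ, ← mul_assoc,
        ENNReal.ofReal_mul (mul_nonneg hlam (pow_nonneg hgam _))]
    rw [tsum_congr hg, ENNReal.tsum_mul_left, hsum I hI m, ← mul_assoc,
      ← ENNReal.ofReal_mul (by positivity)]
    congr 2
    rw [mul_pow, pow_add]
    ring
  calc ∑' J : S, g J = ∑' J : ↥(⋃ m, descendants S r I m), g J := by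
        rw [tsum_subtype, tsum_subtype, hsupp]
    _ = ∑' m, ∑' J : descendants S r I m, g J := ENNReal.tsum_biUnion hdisj
    _ = ∑' m, ENNReal.ofReal (lam * gam ^ r I * α * (gam * (1 - α)) ^ m) * μ I :=
        tsum_congr hlayer
    _ = ENNReal.ofReal (lam * gam ^ r I * α / (1 - gam * (1 - α))) * μ I := by
      rw [ENNReal.tsum_mul_right, ← ENNReal.ofReal_tsum_of_nonneg (fun m => by positivity)
        ((summable_geometric_of_lt_one hq0 hq).mul_left _), tsum_mul_left,
        tsum_geometric_of_lt_one hq0 hq, div_eq_mul_inv]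

noncomputable def stepWeight (S : Set (Set X)) (F : Set X → Set (Set X)) (r : Set X → ℕ)
    (lam gam : ℝ) (x : X) : ℝ :=
  ∑' J : S, lam * gam ^ r J * ((J : Set X) \ ⋃₀ F J).indicator (fun _ => 1) x

theorem integral_stepWeight [Countable S] [IsFiniteMeasure μ] (hα0 : 0 ≤ α) (hα1 : α ≤ 1)
    (hA : ∀ I ∈ S, μ (I \ ⋃₀ F I) = ENNReal.ofReal α * μ I)
    (hsum : ∀ I ∈ S, ∀ m : ℕ,
      ∑' J : descendants S r I m, μ J = ENNReal.ofReal ((1 - α) ^ m) * μ I)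
    (hAmeas : ∀ J ∈ S, MeasurableSet (J \ ⋃₀ F J))
    {I : Set X} (hI : I ∈ S) (hout : ∀ J ∈ S, ¬J ⊆ I → μ ((J \ ⋃₀ F J) ∩ I) = 0)
    (hdesc : ∀ J ∈ S, J ⊆ I → ∃ m, J ∈ descendants S r I m)
    {lam gam : ℝ} (hlam : 0 ≤ lam) (hgam : 0 ≤ gam) (hq : gam * (1 - α) < 1) :
    ∫ x in I, stepWeight S F r lam gam x ∂μ =
      lam * gam ^ r I * α * (μ I).toReal / (1 - gam * (1 - α)) := by
  have hseries := tsum_ofReal_mul_measure_diff_sUnion_inter hα0 hα1 hA hsum hI hout hdesc hlam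
    hgam hq
  simp only [← Measure.restrict_apply (hAmeas _ (Subtype.prop _))] at hseries
  unfold stepWeight
  rw [integral_tsum_mul_indicator (fun J : S => hAmeas J J.2) (fun J : S => by positivity)
    (by rw [hseries]; exact ENNReal.mul_ne_top ENNReal.ofReal_ne_top (measure_ne_top μ I)),
    hseries, ENNReal.toReal_mul, ENNReal.toReal_ofReal (div_nonneg (by positivity) (by linarith))]
  ring

theorem stepWeight_rpow_ae_eq [Countable S]
    (hdisj : Pairwise (Function.onFun (AEDisjoint μ) fun J : S => (J : Set X) \ ⋃₀ F J))
    {lam gam : ℝ} (hlam : 0 ≤ lam) (hgam : 0 ≤ gam) {e : ℝ} (he : e ≠ 0) :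
    (fun x => stepWeight S F r lam gam x ^ e) =ᵐ[μ] stepWeight S F r (lam ^ e) (gam ^ e) := by
  refine (ae_comp_tsum_mul_indicator hdisj _ (g := (· ^ e)) (Real.zero_rpow he)).trans
    (Filter.Eventually.of_forall fun x => tsum_congr fun J => ?_)
  rw [Real.mul_rpow hlam (pow_nonneg hgam _), Real.rpow_pow_comm hgam]

end Tree

theorem ap_ratio_eq {p α b a D₁ D₂ : ℝ} (hp : 1 < p) (hα : 0 < α) (hb : 0 < b) (ha : 0 < a)
    (hD₂ : 0 < D₂) :
    b * α * a / D₁ * (b ^ (-(1 / (p - 1))) * α * a / D₂) ^ (p - 1) / a ^ p =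
      α ^ p / (D₁ * D₂ ^ (p - 1)) := by
  have hexp : -(1 / (p - 1)) * (p - 1) = -1 := by field_simp [(sub_pos.2 hp).ne']
  have hpow : (b ^ (-(1 / (p - 1))) * α * a / D₂) ^ (p - 1) =
      b⁻¹ * (α * a) ^ (p - 1) / D₂ ^ (p - 1) := by
    rw [mul_assoc, Real.div_rpow (by positivity) hD₂.le,
      Real.mul_rpow (by positivity) (by positivity), ← Real.rpow_mul hb.le, hexp,
      Real.rpow_neg_one]
  rw [hpow, Real.mul_rpow hα.le ha.le, Real.rpow_sub_one hα.ne', Real.rpow_sub_one ha.ne']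
  field_simp

theorem construction_Ap_constant_general {X : Type*} [MeasurableSpace X] (μ : Measure X)
    [IsProbabilityMeasure μ]
    (p α lam2 γ2 : ℝ) (hp : 1 < p) (hα0 : 0 < α) (hα1 : α < 1) (hlam2 : 0 < lam2)
    (hγ0 : 0 < γ2) (hγ1 : γ2 * (1 - α) < 1) (hγ2 : γ2 ^ (-(1 / (p - 1))) * (1 - α) < 1)
    (S : Set (Set X)) (F : Set X → Set (Set X)) (r : Set X → ℕ)
    (hSc : S.Countable)
    (hmeas : ∀ I ∈ S, MeasurableSet I)
    (hpos : ∀ I ∈ S, 0 < μ I)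
    (hFS : ∀ I ∈ S, F I ⊆ S)
    (hFsub : ∀ I ∈ S, ∀ J ∈ F I, J ⊆ I)
    (hFdisj : ∀ I ∈ S, ∀ J ∈ F I, ∀ K ∈ F I, J ≠ K → μ (J ∩ K) = 0)
    (hFmeasure : ∀ I ∈ S, μ (⋃₀ F I) = ENNReal.ofReal (1 - α) * μ I)
    (hnested : ∀ I ∈ S, ∀ J ∈ S, I ⊆ J ∨ J ⊆ I ∨ μ (I ∩ J) = 0)
    (hA : ∀ I ∈ S, μ (I \ ⋃₀ F I) = ENNReal.ofReal α * μ I)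
    (hr : ∀ I ∈ S, ∀ J ∈ F I, r J = r I + 1)
    (hsum : ∀ I ∈ S, ∀ m : ℕ,
      ∑' J : {J : Set X // J ∈ S ∧ J ⊆ I ∧ r J = r I + m}, μ (J : Set X) =
        ENNReal.ofReal ((1 - α) ^ m) * μ I)
    (w : X → ℝ)
    (hw : w = fun x => ∑' J : S, lam2 * γ2 ^ r (J : Set X) *
      Set.indicator ((J : Set X) \ ⋃₀ F (J : Set X)) (fun _ => (1 : ℝ)) x) :
    ∀ I ∈ S,
      (∫ x in I, w x ∂μ) * (∫ x in I, w x ^ (-(1 / (p - 1))) ∂μ) ^ (p - 1) /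
          ((μ I).toReal) ^ p =
        α ^ p /
          ((1 - γ2 * (1 - α)) * (1 - γ2 ^ (-(1 / (p - 1))) * (1 - α)) ^ (p - 1)) := by
  intro I hI
  have : Countable S := hSc.to_subtype
  have hchildren : ∀ I ∈ S, ∑' C : F I, μ C = ENNReal.ofReal (1 - α) * μ I := fun I hI => by
    rw [← hFmeasure I hI, measure_sUnion₀ (hSc.mono (hFS I hI)) (hFdisj I hI)
      fun C hC => (hmeas C (hFS I hI hC)).nullMeasurableSet]
  have hcover : ∀ I ∈ S, ∀ K ∈ S, K ⊂ I → K ⊆ ⋃₀ F I := fun I hI K hK =>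
    subset_sUnion_children hα1 hpos hFS hFsub hFdisj hr hchildren hsum hI hK
  have hAmeas : ∀ J ∈ S, MeasurableSet (J \ ⋃₀ F J) := fun J hJ =>
    (hmeas J hJ).diff (.sUnion (hSc.mono (hFS J hJ)) fun C hC => hmeas C (hFS J hJ hC))
  have hint {lam gam : ℝ} (hlam : 0 ≤ lam) (hgam : 0 ≤ gam) (hq : gam * (1 - α) < 1) :
      ∫ x in I, stepWeight S F r lam gam x ∂μ =
        lam * gam ^ r I * α * (μ I).toReal / (1 - gam * (1 - α)) :=
    integral_stepWeight (μ := μ) hα0.le hα1.le hA hsum hAmeas hI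
      (fun J hJ hJI => measure_diff_sUnion_inter_eq_zero hnested hcover hI hJ hJI)
      (fun J hJ hJI => exists_mem_descendants hα1 hpos hsum hI hJ hJI) hlam hgam hq
  have he : -(1 / (p - 1)) ≠ 0 := neg_ne_zero.2 (one_div_pos.2 (sub_pos.2 hp)).ne'
  rw [show w = stepWeight S F r lam2 γ2 from hw,
    integral_congr_ae (ae_restrict_of_ae (stepWeight_rpow_ae_eq
      (aedisjoint_diff_sUnion hnested hcover) hlam2.le hγ0.le he)),
    hint hlam2.le hγ0.le hγ1, hint (by positivity) (by positivity) hγ2, Real.rpow_pow_comm hγ0.le,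
    ← Real.mul_rpow hlam2.le (by positivity)]
  exact ap_ratio_eq hp hα0 (by positivity)
    (ENNReal.toReal_pos (hpos I hI).ne' (measure_ne_top μ I)) (sub_pos.2 hγ2)

/-- In the same construction, the weight
`w_α = Σ_{I∈S} λ₂ γ₂^(r I) χ_{A_I}` (with `λ₂ > 0`, `γ₂ > 0`,
`γ₂(1-α) < 1`, `γ₂^(-1/(p-1))(1-α) < 1`) satisfies, for every `I ∈ S`,
`w_α(I)·(∫_I w_α^(-1/(p-1)) dμ)^(p-1)/μ(I)^p
  = α^p / ((1 - γ₂(1-α))·(1 - γ₂^(-1/(p-1))(1-α))^(p-1))`;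
in particular `w_α` is an `A_p` weight with respect to the tree `S` with this
constant. -/
theorem construction_Ap_constant {X : Type*} [MeasurableSpace X] (μ : Measure X)
    [IsProbabilityMeasure μ]
    (hna : ∀ s : Set X, MeasurableSet s → μ s ≠ 0 →
      ∃ t ⊆ s, MeasurableSet t ∧ 0 < μ t ∧ μ t < μ s)
    (p α lam2 γ2 : ℝ) (hp : 1 < p) (hα0 : 0 < α) (hα1 : α < 1) (hlam2 : 0 < lam2)
    (hγ0 : 0 < γ2) (hγ1 : γ2 * (1 - α) < 1) (hγ2 : γ2 ^ (-(1 / (p - 1))) * (1 - α) < 1)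
    (S : Set (Set X)) (F : Set X → Set (Set X)) (r : Set X → ℕ)
    (hSc : S.Countable)
    (hmeas : ∀ I ∈ S, MeasurableSet I)
    (hpos : ∀ I ∈ S, 0 < μ I)
    (hXS : Set.univ ∈ S)
    (hFS : ∀ I ∈ S, F I ⊆ S)
    (hFsub : ∀ I ∈ S, ∀ J ∈ F I, J ⊆ I)
    (hFdisj : ∀ I ∈ S, ∀ J ∈ F I, ∀ K ∈ F I, J ≠ K → μ (J ∩ K) = 0)
    (hFmeasure : ∀ I ∈ S, μ (⋃₀ F I) = ENNReal.ofReal (1 - α) * μ I)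
    (hnested : ∀ I ∈ S, ∀ J ∈ S, I ⊆ J ∨ J ⊆ I ∨ μ (I ∩ J) = 0)
    (hA : ∀ I ∈ S, μ (I \ ⋃₀ F I) = ENNReal.ofReal α * μ I)
    (hr0 : r Set.univ = 0)
    (hr : ∀ I ∈ S, ∀ J ∈ F I, r J = r I + 1)
    (hdecomp : ∀ I ∈ S, μ (I \ ⋃₀ {A : Set X | ∃ J ∈ S, J ⊆ I ∧ A = J \ ⋃₀ F J}) = 0)
    (hsum : ∀ I ∈ S, ∀ m : ℕ,
      ∑' J : {J : Set X // J ∈ S ∧ J ⊆ I ∧ r J = r I + m}, μ (J : Set X) =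
        ENNReal.ofReal ((1 - α) ^ m) * μ I)
    (w : X → ℝ)
    (hw : w = fun x => ∑' J : S, lam2 * γ2 ^ r (J : Set X) *
      Set.indicator ((J : Set X) \ ⋃₀ F (J : Set X)) (fun _ => (1 : ℝ)) x) :
    ∀ I ∈ S,
      (∫ x in I, w x ∂μ) * (∫ x in I, w x ^ (-(1 / (p - 1))) ∂μ) ^ (p - 1) /
          ((μ I).toReal) ^ p =
        α ^ p /
          ((1 - γ2 * (1 - α)) * (1 - γ2 ^ (-(1 / (p - 1))) * (1 - α)) ^ (p - 1)) :=
  construction_Ap_constant_general μ p α lam2 γ2 hp hα0 hα1 hlam2 hγ0 hγ1 hγ2 S F r hSc hmeas hpos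
    hFS hFsub hFdisj hFmeasure hnested hA hr hsum w hw
end
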